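/- Let σ¹¹, σ¹², σ²¹, σ²², μ¹, μ² : ℝ² → ℝ be smooth functions satisfying the homogeneous planar Cosserat equations ∂₁σ¹¹ + ∂₂σ¹² = 0, ∂₁σ²¹ + ∂₂σ²² = 0, ∂₁μ¹ + ∂₂μ² + σ¹² − σ²¹ = 0. Then there exist smooth functions φ¹, φ², φ³ : ℝ² → ℝ such that σ¹¹ = ∂₂φ¹, σ¹² = −∂₁φ¹, σ²¹ = −∂₂φ², σ²² = ∂₁φ², μ¹ = ∂₂φ³ + φ¹, μ² = −∂₁φ³ − φ² on all of ℝ². -/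

import Mathlib

/-- Partial derivative with respect to the first variable of a function on `ℝ²`. -/
noncomputable def pd1 (f : ℝ × ℝ → ℝ) (x : ℝ × ℝ) : ℝ := fderiv ℝ f x (1, 0)

/-- Partial derivative with respect to the second variable of a function on `ℝ²`. -/
noncomputable def pd2 (f : ℝ × ℝ → ℝ) (x : ℝ × ℝ) : ℝ := fderiv ℝ f x (0, 1)

open MeasureTheory intervalIntegral Set

namespace CosseratAux

/-! ### A primitive of an analytic map is analytic -/

variable {E F : Type*} [NormedAddCommGroup E] [NormedSpace ℝ E]
  [NormedAddCommGroup F] [NormedSpace ℝ F] [CompleteSpace F]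

/-! ### The Poincaré construction on `ℝ²` -/

/-- The 1-form `f dx + g dy` as a map to continuous linear maps. -/
noncomputable def om (f g : ℝ × ℝ → ℝ) (x : ℝ × ℝ) : (ℝ × ℝ) →L[ℝ] ℝ :=
  f x • ContinuousLinearMap.fst ℝ ℝ ℝ + g x • ContinuousLinearMap.snd ℝ ℝ ℝ

/-- Derivative in `x` of `y ↦ f (t•y) * y.1 + g (t•y) * y.2`. -/
noncomputable def Fd (f g : ℝ × ℝ → ℝ) (x : ℝ × ℝ) (t : ℝ) : (ℝ × ℝ) →L[ℝ] ℝ :=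
  (f (t • x) • ContinuousLinearMap.fst ℝ ℝ ℝ +
    x.1 • ((fderiv ℝ f (t • x)).comp (t • ContinuousLinearMap.id ℝ (ℝ × ℝ)))) +
  (g (t • x) • ContinuousLinearMap.snd ℝ ℝ ℝ +
    x.2 • ((fderiv ℝ g (t • x)).comp (t • ContinuousLinearMap.id ℝ (ℝ × ℝ))))

/-- The radial potential. -/
noncomputable def pphi (f g : ℝ × ℝ → ℝ) (x : ℝ × ℝ) : ℝ :=
  ∫ t in (0 : ℝ)..1, (f (t • x) * x.1 + g (t • x) * x.2)

lemma clm_decomp (L : (ℝ × ℝ) →L[ℝ] ℝ) (w : ℝ × ℝ) :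
    L w = w.1 * L (1, 0) + w.2 * L (0, 1) := by
  have hw : w = w.1 • ((1 : ℝ), (0 : ℝ)) + w.2 • ((0 : ℝ), (1 : ℝ)) := by
    ext <;> simp
  conv_lhs => rw [hw]
  simp only [map_add, ContinuousLinearMap.map_smul, smul_eq_mul]

variable {f g : ℝ × ℝ → ℝ}

lemma contDiff_om (hf : ContDiff ℝ (⊤ : ℕ∞) f) (hg : ContDiff ℝ (⊤ : ℕ∞) g) :
    ContDiff ℝ (⊤ : ℕ∞) (om f g) :=
  (hf.smul contDiff_const).add (hg.smul contDiff_const)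

lemma hasFDerivAt_inner (hf : ContDiff ℝ (⊤ : ℕ∞) f) (hg : ContDiff ℝ (⊤ : ℕ∞) g) (t : ℝ) (x : ℝ × ℝ) :
    HasFDerivAt (fun y : ℝ × ℝ => f (t • y) * y.1 + g (t • y) * y.2) (Fd f g x t) x := by
  have hsm : HasFDerivAt (fun y : ℝ × ℝ => t • y)
      (t • ContinuousLinearMap.id ℝ (ℝ × ℝ)) x := (hasFDerivAt_id x).const_smul t
  have h1 : HasFDerivAt (fun y : ℝ × ℝ => f (t • y))
      ((fderiv ℝ f (t • x)).comp (t • ContinuousLinearMap.id ℝ (ℝ × ℝ))) x :=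
    ((hf.differentiable (by simp) _).hasFDerivAt.comp x hsm)
  have h2 : HasFDerivAt (fun y : ℝ × ℝ => g (t • y))
      ((fderiv ℝ g (t • x)).comp (t • ContinuousLinearMap.id ℝ (ℝ × ℝ))) x :=
    ((hg.differentiable (by simp) _).hasFDerivAt.comp x hsm)
  exact (h1.mul hasFDerivAt_fst).add (h2.mul hasFDerivAt_snd)

lemma cont_Fd (hf : ContDiff ℝ (⊤ : ℕ∞) f) (hg : ContDiff ℝ (⊤ : ℕ∞) g) :
    Continuous fun p : ℝ × (ℝ × ℝ) => Fd f g p.2 p.1 := by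
  have hsc : Continuous fun p : ℝ × (ℝ × ℝ) => p.1 • p.2 := continuous_fst.smul continuous_snd
  have hfc : Continuous fun p : ℝ × (ℝ × ℝ) => f (p.1 • p.2) := hf.continuous.comp hsc
  have hgc : Continuous fun p : ℝ × (ℝ × ℝ) => g (p.1 • p.2) := hg.continuous.comp hsc
  have hdf : Continuous fun p : ℝ × (ℝ × ℝ) => fderiv ℝ f (p.1 • p.2) :=
    (hf.continuous_fderiv (by simp)).comp hsc
  have hdg : Continuous fun p : ℝ × (ℝ × ℝ) => fderiv ℝ g (p.1 • p.2) :=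
    (hg.continuous_fderiv (by simp)).comp hsc
  have hid : Continuous fun p : ℝ × (ℝ × ℝ) => p.1 • ContinuousLinearMap.id ℝ (ℝ × ℝ) :=
    continuous_fst.smul continuous_const
  exact ((hfc.smul continuous_const).add
      ((continuous_snd.fst).smul (hdf.clm_comp hid))).add
    ((hgc.smul continuous_const).add ((continuous_snd.snd).smul (hdg.clm_comp hid)))

lemma integral_Fd (hf : ContDiff ℝ (⊤ : ℕ∞) f) (hg : ContDiff ℝ (⊤ : ℕ∞) g)
    (hcl : ∀ x, pd2 f x = pd1 g x) (x₀ : ℝ × ℝ) :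
    (∫ t in (0 : ℝ)..1, Fd f g x₀ t) = om f g x₀ := by
  have hcFd : Continuous fun t : ℝ => Fd f g x₀ t :=
    (cont_Fd hf hg).comp (continuous_id.prodMk continuous_const)
  have hint : IntervalIntegrable (fun t : ℝ => Fd f g x₀ t) volume 0 1 :=
    hcFd.intervalIntegrable _ _
  apply ContinuousLinearMap.ext
  intro v
  rw [ContinuousLinearMap.intervalIntegral_apply hint v]
  have hFdv : ∀ t : ℝ, (Fd f g x₀ t) v =
      (1 * f (t • x₀) + t * ((fderiv ℝ f (t • x₀)) x₀)) * v.1 +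
      (1 * g (t • x₀) + t * ((fderiv ℝ g (t • x₀)) x₀)) * v.2 := by
    intro t
    have hc := hcl (t • x₀)
    simp only [pd1, pd2] at hc
    simp only [Fd, ContinuousLinearMap.add_apply, ContinuousLinearMap.smul_apply,
      ContinuousLinearMap.coe_comp', Function.comp_apply, ContinuousLinearMap.coe_fst',
      ContinuousLinearMap.coe_snd', ContinuousLinearMap.id_apply, _root_.map_smul, smul_eq_mul]
    rw [clm_decomp (fderiv ℝ f (t • x₀)) v, clm_decomp (fderiv ℝ g (t • x₀)) v,
      clm_decomp (fderiv ℝ f (t • x₀)) x₀, clm_decomp (fderiv ℝ g (t • x₀)) x₀]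
    linear_combination (t * (x₀.1 * v.2 - x₀.2 * v.1)) * hc
  have hder : ∀ t ∈ Set.uIcc (0 : ℝ) 1,
      HasDerivAt (fun s : ℝ => s * f (s • x₀) * v.1 + s * g (s • x₀) * v.2)
        ((Fd f g x₀ t) v) t := by
    intro t _
    rw [hFdv t]
    have hx : HasDerivAt (fun s : ℝ => s • x₀) x₀ t := by
      simpa using (hasDerivAt_id t).smul_const x₀
    have hfd : HasDerivAt (fun s : ℝ => f (s • x₀)) ((fderiv ℝ f (t • x₀)) x₀) t :=
      (hf.differentiable (by simp) _).hasFDerivAt.comp_hasDerivAt t hx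
    have hgd : HasDerivAt (fun s : ℝ => g (s • x₀)) ((fderiv ℝ g (t • x₀)) x₀) t :=
      (hg.differentiable (by simp) _).hasFDerivAt.comp_hasDerivAt t hx
    exact (((hasDerivAt_id t).mul hfd).mul_const v.1).add
      (((hasDerivAt_id t).mul hgd).mul_const v.2)
  rw [intervalIntegral.integral_eq_sub_of_hasDerivAt hder
    ((hcFd.clm_apply continuous_const).intervalIntegrable 0 1)]
  simp [om]

lemma key_hasFDerivAt (hf : ContDiff ℝ (⊤ : ℕ∞) f) (hg : ContDiff ℝ (⊤ : ℕ∞) g)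
    (hcl : ∀ x, pd2 f x = pd1 g x) (x₀ : ℝ × ℝ) :
    HasFDerivAt (pphi f g) (om f g x₀) x₀ := by
  obtain ⟨C, hC⟩ := (isCompact_Icc.prod (isCompact_closedBall x₀ 1)).exists_bound_of_continuousOn
    ((cont_Fd hf hg).continuousOn)
  have contF : ∀ x : ℝ × ℝ, Continuous fun t : ℝ => f (t • x) * x.1 + g (t • x) * x.2 := by
    intro x
    have h1 : Continuous fun t : ℝ => t • x := continuous_id.smul continuous_const
    exact ((hf.continuous.comp h1).mul continuous_const).add
      ((hg.continuous.comp h1).mul continuous_const)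
  have hres := intervalIntegral.hasFDerivAt_integral_of_dominated_of_fderiv_le
    (F := fun (x : ℝ × ℝ) (t : ℝ) => f (t • x) * x.1 + g (t • x) * x.2)
    (F' := fun x t => Fd f g x t) (x₀ := x₀) (a := 0) (b := 1) (μ := volume)
    (bound := fun _ => C) (Metric.ball_mem_nhds x₀ one_pos)
    (Filter.Eventually.of_forall fun x => (contF x).aestronglyMeasurable)
    ((contF x₀).intervalIntegrable _ _)
    (((cont_Fd hf hg).comp (continuous_id.prodMk continuous_const)).aestronglyMeasurable)
    (Filter.Eventually.of_forall fun t ht x hx => by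
      refine hC (t, x) ⟨?_, Metric.ball_subset_closedBall hx⟩
      rw [Set.uIoc_of_le zero_le_one] at ht
      exact Set.Ioc_subset_Icc_self ht)
    intervalIntegrable_const
    (Filter.Eventually.of_forall fun t ht x hx => hasFDerivAt_inner hf hg t x)
  rw [integral_Fd hf hg hcl x₀] at hres
  exact hres

theorem poincare (f g : ℝ × ℝ → ℝ) (hf : ContDiff ℝ (⊤ : ℕ∞) f) (hg : ContDiff ℝ (⊤ : ℕ∞) g)
    (hcl : ∀ x, pd2 f x = pd1 g x) :
    ∃ φ : ℝ × ℝ → ℝ, ContDiff ℝ (⊤ : ℕ∞) φ ∧ (∀ x, pd1 φ x = f x) ∧ ∀ x, pd2 φ x = g x := by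
  have key := key_hasFDerivAt hf hg hcl
  have hdiff : Differentiable ℝ (pphi f g) := fun x => (key x).differentiableAt
  have hfderiv : fderiv ℝ (pphi f g) = om f g := funext fun x => (key x).fderiv
  have hom : ContDiff ℝ (⊤ : ℕ∞) (om f g) := contDiff_om hf hg
  refine ⟨pphi f g, ?_, ?_, ?_⟩
  · rw [contDiff_infty_iff_fderiv]
    exact ⟨hdiff, by rw [hfderiv]; exact hom⟩
  · intro x
    simp [pd1, hfderiv, om]
  · intro x
    simp [pd2, hfderiv, om]

end CosseratAux

section pdlemmas

lemma pd1_neg (f : ℝ × ℝ → ℝ) (x : ℝ × ℝ) : pd1 (fun y => -f y) x = -pd1 f x := by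
  simp [pd1, fderiv_neg]

lemma pd2_neg (f : ℝ × ℝ → ℝ) (x : ℝ × ℝ) : pd2 (fun y => -f y) x = -pd2 f x := by
  simp [pd2, fderiv_neg]

lemma pd1_sub (f g : ℝ × ℝ → ℝ) (hf : Differentiable ℝ f) (hg : Differentiable ℝ g)
    (x : ℝ × ℝ) : pd1 (fun y => f y - g y) x = pd1 f x - pd1 g x := by
  simp [pd1, fderiv_fun_sub (hf x) (hg x)]

lemma pd2_sub (f g : ℝ × ℝ → ℝ) (hf : Differentiable ℝ f) (hg : Differentiable ℝ g)
    (x : ℝ × ℝ) : pd2 (fun y => f y - g y) x = pd2 f x - pd2 g x := by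
  simp [pd2, fderiv_fun_sub (hf x) (hg x)]

end pdlemmas

/-- Every smooth solution of the homogeneous planar Cosserat equations on `ℝ²`
admits a global first-order parametrization by three potentials `φ¹, φ², φ³`:
`σ¹¹ = ∂₂φ¹`, `σ¹² = −∂₁φ¹`, `σ²¹ = −∂₂φ²`, `σ²² = ∂₁φ²`, `μ¹ = ∂₂φ³ + φ¹`,
`μ² = −∂₁φ³ − φ²`. -/
theorem cosserat_parametrization_exists
    (σ11 σ12 σ21 σ22 μ1 μ2 : ℝ × ℝ → ℝ)
    (hσ11 : ContDiff ℝ (⊤ : ℕ∞) σ11) (hσ12 : ContDiff ℝ (⊤ : ℕ∞) σ12)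
    (hσ21 : ContDiff ℝ (⊤ : ℕ∞) σ21) (hσ22 : ContDiff ℝ (⊤ : ℕ∞) σ22)
    (hμ1 : ContDiff ℝ (⊤ : ℕ∞) μ1) (hμ2 : ContDiff ℝ (⊤ : ℕ∞) μ2)
    (h1 : ∀ x : ℝ × ℝ, pd1 σ11 x + pd2 σ12 x = 0)
    (h2 : ∀ x : ℝ × ℝ, pd1 σ21 x + pd2 σ22 x = 0)
    (h3 : ∀ x : ℝ × ℝ, pd1 μ1 x + pd2 μ2 x + σ12 x - σ21 x = 0) :
    ∃ φ1 φ2 φ3 : ℝ × ℝ → ℝ,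
      ContDiff ℝ (⊤ : ℕ∞) φ1 ∧ ContDiff ℝ (⊤ : ℕ∞) φ2 ∧ ContDiff ℝ (⊤ : ℕ∞) φ3 ∧
      ∀ x : ℝ × ℝ,
        σ11 x = pd2 φ1 x ∧
        σ12 x = -pd1 φ1 x ∧
        σ21 x = -pd2 φ2 x ∧
        σ22 x = pd1 φ2 x ∧
        μ1 x = pd2 φ3 x + φ1 x ∧
        μ2 x = -pd1 φ3 x - φ2 x := by
  -- first potential
  obtain ⟨φ1, hφ1, hφ1a, hφ1b⟩ := CosseratAux.poincare (fun x => -σ12 x) σ11 (hσ12.neg) hσ11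
    (fun x => by rw [pd2_neg]; linarith [h1 x])
  -- second potential
  obtain ⟨φ2, hφ2, hφ2a, hφ2b⟩ := CosseratAux.poincare σ22 (fun x => -σ21 x) hσ22 (hσ21.neg)
    (fun x => by rw [pd1_neg]; linarith [h2 x])
  -- third potential
  obtain ⟨φ3, hφ3, hφ3a, hφ3b⟩ := CosseratAux.poincare
    (fun x => (fun y => -μ2 y) x - φ2 x) (fun x => μ1 x - φ1 x)
    ((hμ2.neg).sub hφ2) (hμ1.sub hφ1)
    (fun x => by
      rw [pd2_sub (fun y => -μ2 y) φ2 (hμ2.neg.differentiable (by simp))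
          (hφ2.differentiable (by simp)),
        pd1_sub μ1 φ1 (hμ1.differentiable (by simp)) (hφ1.differentiable (by simp)),
        pd2_neg]
      have e1 := hφ2b x
      have e2 := hφ1a x
      have := h3 x
      linarith)
  refine ⟨φ1, φ2, φ3, hφ1, hφ2, hφ3, fun x => ?_⟩
  have a1 := hφ1a x; have a2 := hφ1b x
  have b1 := hφ2a x; have b2 := hφ2b x
  have c1 : pd1 φ3 x = -μ2 x - φ2 x := hφ3a x
  have c2 := hφ3b x
  refine ⟨by linarith, by linarith, by linarith, by linarith, by linarith, by linarith⟩
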